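/- Let the semitopological semigroup G be represented on the complex Banach space X by a bounded semigroup 𝒮 = {S_g : g ∈ G}. If 𝒮 (endowed with the strong operator topology) is right amenable, then there exists a strong right 𝒮-ergodic net in L(X); if 𝒮 is amenable, then there exists a strong 𝒮-ergodic net in L(X). -/

import Mathlib

open Filter Topology

noncomputable section

variable {G X : Type}

/-- The strong operator topology on `X →L[ℂ] X`: the topology induced by the
inclusion into the product `X → X` (pointwise norm convergence). -/
def sot (X : Type) [NormedAddCommGroup X] [NormedSpace ℂ X] :
    TopologicalSpace (X →L[ℂ] X) :=
  TopologicalSpace.induced (fun T : X →L[ℂ] X => (T : X → X)) inferInstance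

section
variable [NormedAddCommGroup X] [NormedSpace ℂ X]

/-- The closure, in the strong operator topology, of the convex hull of a set of operators;
this is `co̅ M`. -/
def sotClosedConvexHull (M : Set (X →L[ℂ] X)) : Set (X →L[ℂ] X) :=
  @closure _ (sot X) (convexHull ℝ M)

/-- A strong right `𝒮`-ergodic net: a net of operators in `co̅ 𝒮` which is strongly right
asymptotically invariant. -/
def StrongRightErgodicNet {ι : Type} [Preorder ι]
    (S : G → (X →L[ℂ] X)) (A : ι → (X →L[ℂ] X)) : Prop :=
  (∀ α, A α ∈ sotClosedConvexHull (Set.range S)) ∧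
  ∀ (x : X) (g : G),
    Tendsto (fun α => ‖A α x - A α (S g x)‖) atTop (nhds 0)

/-- A strong left `𝒮`-ergodic net. -/
def StrongLeftErgodicNet {ι : Type} [Preorder ι]
    (S : G → (X →L[ℂ] X)) (A : ι → (X →L[ℂ] X)) : Prop :=
  (∀ α, A α ∈ sotClosedConvexHull (Set.range S)) ∧
  ∀ (x : X) (g : G),
    Tendsto (fun α => ‖A α x - S g (A α x)‖) atTop (nhds 0)

/-- A strong `𝒮`-ergodic net: both a strong right and a strong left `𝒮`-ergodic net. -/
def StrongErgodicNet {ι : Type} [Preorder ι]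
    (S : G → (X →L[ℂ] X)) (A : ι → (X →L[ℂ] X)) : Prop :=
  StrongRightErgodicNet S A ∧ StrongLeftErgodicNet S A

/-- A weak right `𝒮`-ergodic net: a net of operators in `co̅ 𝒮` which is weakly right
asymptotically invariant (invariance in the weak topology `σ(X,X')`). -/
def WeakRightErgodicNet {ι : Type} [Preorder ι]
    (S : G → (X →L[ℂ] X)) (A : ι → (X →L[ℂ] X)) : Prop :=
  (∀ α, A α ∈ sotClosedConvexHull (Set.range S)) ∧
  ∀ (x : X) (g : G) (φ : X →L[ℂ] ℂ),
    Tendsto (fun α => φ (A α x - A α (S g x))) atTop (nhds 0)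

/-- A weak left `𝒮`-ergodic net. -/
def WeakLeftErgodicNet {ι : Type} [Preorder ι]
    (S : G → (X →L[ℂ] X)) (A : ι → (X →L[ℂ] X)) : Prop :=
  (∀ α, A α ∈ sotClosedConvexHull (Set.range S)) ∧
  ∀ (x : X) (g : G) (φ : X →L[ℂ] ℂ),
    Tendsto (fun α => φ (A α x - S g (A α x))) atTop (nhds 0)

/-- A weak `𝒮`-ergodic net: both a weak right and a weak left `𝒮`-ergodic net. -/
def WeakErgodicNet {ι : Type} [Preorder ι]
    (S : G → (X →L[ℂ] X)) (A : ι → (X →L[ℂ] X)) : Prop :=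
  WeakRightErgodicNet S A ∧ WeakLeftErgodicNet S A

/-- `𝒮 = {S_g : g ∈ G}`, endowed with the strong operator topology and operator
multiplication (note `S_h S_g = S_{g h}`), is right amenable: there is a mean `m` on
`C_b(𝒮)` (a continuous linear functional with `⟨m, 1⟩ = ‖m‖ = 1`) which is right
invariant, i.e. `⟨m, R_T f⟩ = ⟨m, f⟩` for all `T ∈ 𝒮`, where `R_{S_g} f (S_h) = f (S_h S_g)
= f (S_{g h})`. -/
def RightAmenable [Mul G] (S : G → (X →L[ℂ] X)) : Prop :=
  letI : TopologicalSpace (X →L[ℂ] X) := sot X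
  ∃ m : BoundedContinuousFunction (Set.range S) ℂ →L[ℂ] ℂ,
    m (BoundedContinuousFunction.const _ (1 : ℂ)) = 1 ∧ ‖m‖ = 1 ∧
    ∀ (g : G) (f f' : BoundedContinuousFunction (Set.range S) ℂ),
      (∀ h : G, f' ⟨S h, ⟨h, rfl⟩⟩ = f ⟨S (g * h), ⟨g * h, rfl⟩⟩) → m f' = m f

/-- `𝒮 = {S_g : g ∈ G}`, endowed with the strong operator topology, is amenable: there is
a mean on `C_b(𝒮)` which is both right and left invariant (`L_{S_g} f (S_h) = f (S_g S_h)
= f (S_{h g})`). -/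
def Amenable [Mul G] (S : G → (X →L[ℂ] X)) : Prop :=
  letI : TopologicalSpace (X →L[ℂ] X) := sot X
  ∃ m : BoundedContinuousFunction (Set.range S) ℂ →L[ℂ] ℂ,
    m (BoundedContinuousFunction.const _ (1 : ℂ)) = 1 ∧ ‖m‖ = 1 ∧
    (∀ (g : G) (f f' : BoundedContinuousFunction (Set.range S) ℂ),
      (∀ h : G, f' ⟨S h, ⟨h, rfl⟩⟩ = f ⟨S (g * h), ⟨g * h, rfl⟩⟩) → m f' = m f) ∧
    (∀ (g : G) (f f' : BoundedContinuousFunction (Set.range S) ℂ),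
      (∀ h : G, f' ⟨S h, ⟨h, rfl⟩⟩ = f ⟨S (h * g), ⟨h * g, rfl⟩⟩) → m f' = m f)

end

/-! ### Auxiliary machinery -/

/-- Mean positivity: if `Re f ≤ s` pointwise, then `Re (m f) ≤ s`. -/
lemma mean_re_le {Ω : Type*} [TopologicalSpace Ω]
    (m : BoundedContinuousFunction Ω ℂ →L[ℂ] ℂ)
    (hm1 : m (BoundedContinuousFunction.const Ω (1:ℂ)) = 1) (hmn : ‖m‖ = 1)
    (f : BoundedContinuousFunction Ω ℂ) (s : ℝ) (hf : ∀ t, (f t).re ≤ s) :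
    (m f).re ≤ s := by
  refine le_of_forall_pos_le_add fun ε hε => ?_
  set r : ℝ := ((s + ε + ‖f‖)^2 + ‖f‖^2) / (2*ε) with hr
  have hfn : (0:ℝ) ≤ ‖f‖ := norm_nonneg f
  have hr0 : 0 ≤ r := div_nonneg (by positivity) (by positivity)
  set c : ℂ := ((s + ε - r : ℝ) : ℂ) with hc
  have hpt : ∀ t, ‖f t - c‖ ≤ r := by
    intro t
    have hb : ‖f t‖ ≤ ‖f‖ := BoundedContinuousFunction.norm_coe_le_norm f t
    have hre : |(f t).re| ≤ ‖f‖ := (Complex.abs_re_le_norm _).trans hb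
    have him : |(f t).im| ≤ ‖f‖ := (Complex.abs_im_le_norm _).trans hb
    have hd1 : ε ≤ s + ε - (f t).re := by have := hf t; linarith
    have hd2 : s + ε - (f t).re ≤ s + ε + ‖f‖ := by
      have := abs_le.mp hre; linarith [this.1]
    have hkey : 2 * r * (s + ε - (f t).re) ≥ (s + ε - (f t).re)^2 + (f t).im^2 := by
      have h2re : 2 * r * ε = (s + ε + ‖f‖)^2 + ‖f‖^2 := by
        rw [hr]; field_simp
      have h1 : (s + ε - (f t).re)^2 ≤ (s + ε + ‖f‖)^2 := by
        apply sq_le_sq'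
        · nlinarith
        · linarith
      have h2 : (f t).im^2 ≤ ‖f‖^2 := by
        have := abs_le.mp him; nlinarith
      nlinarith [mul_le_mul_of_nonneg_left hd1 (by positivity : (0:ℝ) ≤ 2 * r)]
    have hsq : ‖f t - c‖^2 ≤ r^2 := by
      have : ‖f t - c‖^2 = ((f t).re - (s + ε - r))^2 + (f t).im^2 := by
        rw [Complex.sq_norm, Complex.normSq_apply]
        simp [hc, Complex.sub_re, Complex.sub_im]
        ring
      rw [this]; nlinarith
    nlinarith [norm_nonneg (f t - c)]
  have hnorm : ‖f - BoundedContinuousFunction.const Ω c‖ ≤ r := by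
    apply BoundedContinuousFunction.norm_le hr0 |>.mpr
    intro t; simpa using hpt t
  have hmc : m (BoundedContinuousFunction.const Ω c) = c := by
    have : BoundedContinuousFunction.const Ω c = c • BoundedContinuousFunction.const Ω (1:ℂ) := by
      ext t; simp
    rw [this, map_smul, hm1, smul_eq_mul, mul_one]
  have hest : ‖m f - c‖ ≤ r := by
    calc ‖m f - c‖ = ‖m (f - BoundedContinuousFunction.const Ω c)‖ := by rw [map_sub, hmc]
    _ ≤ ‖m‖ * ‖f - BoundedContinuousFunction.const Ω c‖ := m.le_opNorm _
    _ ≤ r := by rw [hmn, one_mul]; exact hnorm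
  have h1 : (m f - c).re ≤ ‖m f - c‖ := Complex.re_le_norm _
  have hcre : c.re = s + ε - r := by simp [hc]
  have h2 : (m f).re - (s + ε - r) ≤ r := by
    rw [← hcre]; simpa [Complex.sub_re] using le_trans h1 hest
  linarith

section auxhelpers
variable [NormedAddCommGroup X] [NormedSpace ℂ X]

attribute [local instance] sot

/-- The "right" test map `B ↦ B x - B (S g x)`, as an `ℝ`-linear map. -/
def testR (S : G → (X →L[ℂ] X)) (x : X) (g : G) : (X →L[ℂ] X) →ₗ[ℝ] X where
  toFun B := B x - B (S g x)
  map_add' B B' := by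
    simp only [ContinuousLinearMap.add_apply]; abel
  map_smul' c B := by
    simp only [ContinuousLinearMap.coe_smul', Pi.smul_apply, RingHom.id_apply, smul_sub]

/-- The "left" test map `B ↦ B x - S g (B x)`, as an `ℝ`-linear map. -/
def testL (S : G → (X →L[ℂ] X)) (x : X) (g : G) : (X →L[ℂ] X) →ₗ[ℝ] X where
  toFun B := B x - S g (B x)
  map_add' B B' := by
    simp only [ContinuousLinearMap.add_apply, map_add]; abel
  map_smul' c B := by
    simp only [ContinuousLinearMap.coe_smul', Pi.smul_apply, RingHom.id_apply, smul_sub,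
      ContinuousLinearMap.map_smul_of_tower]

/-- The function `T ↦ ℓ (T y)` as a bounded continuous (complex-valued) function on a
norm-bounded set `M` of operators, with the strong operator topology. -/
def evalBCF (M : Set (X →L[ℂ] X)) (C : ℝ) (hC : ∀ T ∈ M, ‖T‖ ≤ C)
    (ℓ : X →L[ℝ] ℝ) (y : X) : BoundedContinuousFunction M ℂ :=
  BoundedContinuousFunction.ofNormedAddCommGroup
    (fun T => (ℓ (T.1 y) : ℂ))
    (by
      have h1 : Continuous fun T : M => (T.1 : X → X) :=
        continuous_induced_dom.comp continuous_subtype_val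
      have h2 : Continuous fun T : M => T.1 y := (continuous_apply y).comp h1
      exact Complex.continuous_ofReal.comp (ℓ.continuous.comp h2))
    (‖ℓ‖ * (C * ‖y‖))
    (by
      intro T
      have h1 : ‖T.1 y‖ ≤ C * ‖y‖ :=
        le_trans (T.1.le_opNorm y) (mul_le_mul_of_nonneg_right (hC T.1 T.2) (norm_nonneg y))
      calc ‖((ℓ (T.1 y) : ℝ) : ℂ)‖ = ‖ℓ (T.1 y)‖ := by
            rw [Complex.norm_real]
      _ ≤ ‖ℓ‖ * ‖T.1 y‖ := ℓ.le_opNorm _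
      _ ≤ ‖ℓ‖ * (C * ‖y‖) := mul_le_mul_of_nonneg_left h1 (norm_nonneg ℓ))

@[simp] lemma evalBCF_apply (M : Set (X →L[ℂ] X)) (C : ℝ) (hC : ∀ T ∈ M, ‖T‖ ≤ C)
    (ℓ : X →L[ℝ] ℝ) (y : X) (T : M) :
    evalBCF M C hC ℓ y T = (ℓ (T.1 y) : ℂ) := rfl

/-- The key approximation lemma: from a mean and a family of tests each of which is
"annihilated by the mean" after applying any real functional, produce a single element of the
convex hull of `𝒮` making all tests simultaneously small in norm. -/
lemma key_approx [Semigroup G] (S : G → (X →L[ℂ] X))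
    (m : BoundedContinuousFunction (Set.range S) ℂ →L[ℂ] ℂ)
    (hm1 : m (BoundedContinuousFunction.const _ (1 : ℂ)) = 1)
    (hmn : ‖m‖ = 1)
    (J : Type) [Fintype J] [DecidableEq J]
    (Φ : J → ((X →L[ℂ] X) →ₗ[ℝ] X))
    (hΦ : ∀ (ℓ : X →L[ℝ] ℝ) (j : J),
      ∃ f : BoundedContinuousFunction (Set.range S) ℂ,
        (∀ t : Set.range S, f t = (ℓ (Φ j t.1) : ℂ)) ∧ m f = 0)
    (ε : ℝ) (hε : 0 < ε) :
    ∃ A ∈ convexHull ℝ (Set.range S), ∀ j, ‖Φ j A‖ < ε := by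
  classical
  set E := J → X
  set Φtot : (X →L[ℂ] X) →ₗ[ℝ] E := LinearMap.pi Φ with hΦtot
  set D : Set E := Φtot '' (Set.range S) with hD
  have h0 : (0 : E) ∈ closure (convexHull ℝ D) := by
    by_contra h0
    obtain ⟨ℓE, u, hu0, hu⟩ := geometric_hahn_banach_point_closed
      ((convex_convexHull ℝ D).closure) isClosed_closure h0
    rw [map_zero] at hu0
    set ℓ : J → (X →L[ℝ] ℝ) := fun j =>
      ℓE.comp { toLinearMap := LinearMap.single ℝ (fun _ : J => X) j, cont := by exact continuous_single (A := fun _ : J => X) j } with hℓ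
    choose f hf hf0 using fun j => hΦ (ℓ j) j
    set F := ∑ j, f j with hF
    have hmF : m F = 0 := by
      rw [hF, map_sum]
      simp [hf0]
    have hFval : ∀ t : Set.range S, F t = (ℓE (Φtot t.1) : ℂ) := by
      intro t
      have h1 : F t = ∑ j, f j t := by
        rw [hF]; simp
      rw [h1]
      have h2 : ∑ j, f j t = ∑ j, ((ℓ j) (Φ j t.1) : ℂ) :=
        Finset.sum_congr rfl fun j _ => hf j t
      rw [h2, ← Complex.ofReal_sum]
      congr 1
      have h3 : ∀ j, (ℓ j) (Φ j t.1) = ℓE (Pi.single j (Φ j t.1)) := fun j => by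
        simp [hℓ, LinearMap.single]; rfl
      simp_rw [h3, ← map_sum]
      congr 1
      exact Finset.univ_sum_single (fun j => Φ j t.1)
    have hlow : ∀ t : Set.range S, ((-F) t).re ≤ -u := by
      intro t
      have hmem : Φtot t.1 ∈ closure (convexHull ℝ D) :=
        subset_closure (subset_convexHull ℝ D ⟨t.1, t.2, rfl⟩)
      have h4 := hu _ hmem
      have h5 : u < ((F t).re) := by
        rw [hFval t]; simpa using h4
      simp only [BoundedContinuousFunction.coe_neg, Pi.neg_apply, Complex.neg_re]
      linarith
    have h6 := mean_re_le m hm1 hmn (-F) (-u) hlow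
    rw [map_neg, Complex.neg_re, hmF] at h6
    simp at h6
    linarith
  rw [Metric.mem_closure_iff] at h0
  obtain ⟨v, hv, hvd⟩ := h0 ε hε
  rw [hD, ← Φtot.image_convexHull] at hv
  obtain ⟨A, hA, rfl⟩ := hv
  refine ⟨A, hA, fun j => ?_⟩
  calc ‖Φ j A‖ = ‖Φtot A j‖ := rfl
  _ ≤ ‖Φtot A‖ := norm_le_pi_norm _ j
  _ < ε := by rwa [dist_comm, dist_zero_right] at hvd

end auxhelpers

section auxnet
variable [NormedAddCommGroup X] [NormedSpace ℂ X]

/-- Turn a "finite simultaneous approximation" statement into a net indexed by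
`Finset (X × G) × ℕ`. -/
lemma net_of_approx (S : G → (X →L[ℂ] X)) {ρ : X × G → (X →L[ℂ] X) → ℝ}
    (hρ : ∀ p B, 0 ≤ ρ p B)
    (H : ∀ (F : Finset (X × G)) (ε : ℝ), 0 < ε →
      ∃ A ∈ convexHull ℝ (Set.range S), ∀ p ∈ F, ρ p A < ε) :
    ∃ A : Finset (X × G) × ℕ → (X →L[ℂ] X),
      (∀ α, A α ∈ convexHull ℝ (Set.range S)) ∧
      ∀ p : X × G, Tendsto (fun α => ρ p (A α)) atTop (nhds 0) := by
  classical
  have H' : ∀ α : Finset (X × G) × ℕ, ∃ A ∈ convexHull ℝ (Set.range S),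
      ∀ p ∈ α.1, ρ p A < 1/(α.2+1 : ℝ) := fun α => H α.1 _ (by positivity)
  choose A hA1 hA2 using H'
  refine ⟨A, hA1, fun p => ?_⟩
  have hg : Tendsto (fun α : Finset (X × G) × ℕ => 1/(α.2+1 : ℝ)) atTop (nhds 0) := by
    have h1 : Tendsto (Prod.snd : Finset (X × G) × ℕ → ℕ) atTop atTop := by
      rw [← Filter.prod_atTop_atTop_eq]; exact tendsto_snd
    exact tendsto_one_div_add_atTop_nhds_zero_nat.comp h1
  refine squeeze_zero' (Filter.Eventually.of_forall fun α => hρ p (A α)) ?_ hg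
  filter_upwards [Filter.eventually_ge_atTop (({p} : Finset (X × G)), 0)] with α hα
  exact le_of_lt (hA2 α p (hα.1 (Finset.mem_singleton_self p)))

end auxnet

/-- Corollary 1.5. Let the semitopological semigroup `G` be represented
on the complex Banach space `X` by a bounded semigroup `𝒮 = {S_g : g ∈ G}`. If `𝒮` (with
the strong operator topology) is right amenable, then there exists a strong right
`𝒮`-ergodic net in `L(X)`; if `𝒮` is amenable, then there exists a strong `𝒮`-ergodic
net in `L(X)`. -/
theorem exists_strong_ergodic_net_of_amenable
    {G X : Type} [Semigroup G] [TopologicalSpace G]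
    [NormedAddCommGroup X] [NormedSpace ℂ X] [CompleteSpace X]
    (S : G → (X →L[ℂ] X))
    (hGcont₁ : ∀ g : G, Continuous fun h : G => g * h)
    (hGcont₂ : ∀ g : G, Continuous fun h : G => h * g)
    (hbdd : ∃ C : ℝ, ∀ g : G, ‖S g‖ ≤ C)
    (hmul : ∀ g h : G, (S g).comp (S h) = S (h * g))
    (hScont : ∀ x : X, Continuous fun g : G => S g x) :
    (RightAmenable S →
      ∃ (ι : Type) (_ : Preorder ι) (A : ι → (X →L[ℂ] X)),
        Nonempty ι ∧ IsDirected ι (· ≤ ·) ∧ StrongRightErgodicNet S A) ∧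
    (Amenable S →
      ∃ (ι : Type) (_ : Preorder ι) (A : ι → (X →L[ℂ] X)),
        Nonempty ι ∧ IsDirected ι (· ≤ ·) ∧ StrongErgodicNet S A) := by
  classical
  letI : TopologicalSpace (X →L[ℂ] X) := sot X
  obtain ⟨C, hC⟩ := hbdd
  have hC' : ∀ T ∈ Set.range S, ‖T‖ ≤ C := by rintro T ⟨g, rfl⟩; exact hC g
  constructor
  · rintro ⟨m, hm1, hmn, hinv⟩
    have H : ∀ (F : Finset (X × G)) (ε : ℝ), 0 < ε →
        ∃ A ∈ convexHull ℝ (Set.range S),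
          ∀ p ∈ F, ‖A p.1 - A (S p.2 p.1)‖ < ε := by
      intro F ε hε
      have hΦ : ∀ (ℓ : X →L[ℝ] ℝ) (j : {p : X × G // p ∈ F}),
          ∃ f : BoundedContinuousFunction (Set.range S) ℂ,
            (∀ t : Set.range S, f t = (ℓ (testR S j.1.1 j.1.2 t.1) : ℂ)) ∧ m f = 0 := by
        intro ℓ j
        obtain ⟨⟨x, g⟩, hj⟩ := j
        refine ⟨evalBCF _ C hC' ℓ x - evalBCF _ C hC' ℓ (S g x), ?_, ?_⟩
        · intro t
          simp [testR, map_sub]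
        · rw [map_sub, sub_eq_zero]
          refine (hinv g (evalBCF _ C hC' ℓ x) (evalBCF _ C hC' ℓ (S g x)) ?_).symm
          intro h
          have hx : S (g * h) x = S h (S g x) := by rw [← hmul h g]; rfl
          simp [hx]
      obtain ⟨A, hA, hA2⟩ := key_approx S m hm1 hmn {p : X × G // p ∈ F}
        (fun p => testR S p.1.1 p.1.2) hΦ ε hε
      exact ⟨A, hA, fun p hp => hA2 ⟨p, hp⟩⟩
    obtain ⟨A, hA1, hA2⟩ := net_of_approx S
      (ρ := fun p B => ‖B p.1 - B (S p.2 p.1)‖) (fun p B => norm_nonneg _) H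
    refine ⟨Finset (X × G) × ℕ, inferInstance, A, ⟨(∅, 0)⟩, inferInstance, ?_, ?_⟩
    · intro α
      show A α ∈ closure (convexHull ℝ (Set.range S))
      exact subset_closure (hA1 α)
    · intro x g
      exact hA2 (x, g)
  · rintro ⟨m, hm1, hmn, hinvR, hinvL⟩
    have H : ∀ (F : Finset (X × G)) (ε : ℝ), 0 < ε →
        ∃ A ∈ convexHull ℝ (Set.range S),
          ∀ p ∈ F, ‖A p.1 - A (S p.2 p.1)‖ ⊔ ‖A p.1 - S p.2 (A p.1)‖ < ε := by
      intro F ε hε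
      have hΦ : ∀ (ℓ : X →L[ℝ] ℝ) (j : {p : X × G // p ∈ F} ⊕ {p : X × G // p ∈ F}),
          ∃ f : BoundedContinuousFunction (Set.range S) ℂ,
            (∀ t : Set.range S, f t = (ℓ ((Sum.elim (fun p => testR S p.1.1 p.1.2)
              (fun p => testL S p.1.1 p.1.2) j) t.1) : ℂ)) ∧ m f = 0 := by
        rintro ℓ (⟨⟨x, g⟩, hj⟩ | ⟨⟨x, g⟩, hj⟩)
        · refine ⟨evalBCF _ C hC' ℓ x - evalBCF _ C hC' ℓ (S g x), ?_, ?_⟩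
          · intro t
            simp [testR, map_sub]
          · rw [map_sub, sub_eq_zero]
            refine (hinvR g (evalBCF _ C hC' ℓ x) (evalBCF _ C hC' ℓ (S g x)) ?_).symm
            intro h
            have hx : S (g * h) x = S h (S g x) := by rw [← hmul h g]; rfl
            simp [hx]
        · refine ⟨evalBCF _ C hC' ℓ x -
              evalBCF _ C hC' (ℓ.comp ((S g).restrictScalars ℝ)) x, ?_, ?_⟩
          · intro t
            simp [testL, map_sub]
          · rw [map_sub, sub_eq_zero]
            refine (hinvL g (evalBCF _ C hC' ℓ x)
              (evalBCF _ C hC' (ℓ.comp ((S g).restrictScalars ℝ)) x) ?_).symm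
            intro h
            have hx : S (h * g) x = S g (S h x) := by rw [← hmul g h]; rfl
            simp [hx]
      obtain ⟨A, hA, hA2⟩ := key_approx S m hm1 hmn
        ({p : X × G // p ∈ F} ⊕ {p : X × G // p ∈ F})
        (Sum.elim (fun p => testR S p.1.1 p.1.2) (fun p => testL S p.1.1 p.1.2)) hΦ ε hε
      refine ⟨A, hA, fun p hp => ?_⟩
      exact max_lt (hA2 (Sum.inl ⟨p, hp⟩)) (hA2 (Sum.inr ⟨p, hp⟩))
    obtain ⟨A, hA1, hA2⟩ := net_of_approx S
      (ρ := fun p B => ‖B p.1 - B (S p.2 p.1)‖ ⊔ ‖B p.1 - S p.2 (B p.1)‖)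
      (fun p B => le_trans (norm_nonneg _) (le_max_left _ _)) H
    refine ⟨Finset (X × G) × ℕ, inferInstance, A, ⟨(∅, 0)⟩, inferInstance,
      ⟨⟨?_, ?_⟩, ⟨?_, ?_⟩⟩⟩
    · intro α
      show A α ∈ closure (convexHull ℝ (Set.range S))
      exact subset_closure (hA1 α)
    · intro x g
      exact squeeze_zero (fun α => norm_nonneg _)
        (fun α => le_max_left _ _) (hA2 (x, g))
    · intro α
      show A α ∈ closure (convexHull ℝ (Set.range S))
      exact subset_closure (hA1 α)
    · intro x g
      exact squeeze_zero (fun α => norm_nonneg _)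
        (fun α => le_max_right _ _) (hA2 (x, g))
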